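/- The greedy algorithm for set cover, which at each step picks the set covering the maximum number of uncovered elements, produces a cover of size at most H(n)·OPT, where n = |U|, H(n) = ∑_{k=1}^{n} 1/k is the n-th harmonic number, and OPT is the size of a minimum set cover. -/

import Mathlib

/-!
Let `r i` be the number of elements of `U` still uncovered after `i` greedy steps. The `OPT` sets
of an optimal cover also cover these `r i` elements, so one of them covers at least `r i / OPT`
of them, and by the greedy choice so does the next greedy set: `r i ≤ OPT · (r i - r (i + 1))`.
Hence every step before termination satisfies
`1 ≤ OPT · (r i - r (i + 1)) / r i ≤ OPT · ∑_{r (i + 1) < t ≤ r i} 1 / t`,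
and these sums telescope to at most `H(|U|)`.
-/

open Finset

lemma sub_div_le_sum_Ioc_one_div (a b : ℕ) :
    ((b - a : ℕ) : ℝ) / b ≤ ∑ t ∈ Ioc a b, (1 : ℝ) / t :=
  calc ((b - a : ℕ) : ℝ) / b = ∑ _t ∈ Ioc a b, (1 : ℝ) / b := by
        rw [sum_const, Nat.card_Ioc, nsmul_eq_mul, mul_one_div]
    _ ≤ ∑ t ∈ Ioc a b, (1 : ℝ) / t := sum_le_sum fun t ht => by
        obtain ⟨hat, htb⟩ := mem_Ioc.1 ht
        exact one_div_le_one_div_of_le (by exact_mod_cast Nat.zero_lt_of_lt hat)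
          (by exact_mod_cast htb)

lemma sum_range_sum_Ioc_of_antitone {M : Type*} [AddCommMonoid M] (f : ℕ → M) {r : ℕ → ℕ}
    (hr : Antitone r) (k : ℕ) :
    ∑ m ∈ range k, ∑ t ∈ Ioc (r (m + 1)) (r m), f t = ∑ t ∈ Ioc (r k) (r 0), f t := by
  induction k with
  | zero => simp
  | succ k ih =>
    rw [sum_range_succ, ih, add_comm, sum_Ioc_consecutive f (hr k.le_succ) (hr k.zero_le)]

lemma le_mul_sum_one_div_of_le_mul_sub {r : ℕ → ℕ} (hr : Antitone r) {c k : ℕ}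
    (hpos : ∀ m < k, r m ≠ 0) (hstep : ∀ m < k, r m ≤ c * (r m - r (m + 1))) :
    (k : ℝ) ≤ c * ∑ t ∈ Icc 1 (r 0), (1 : ℝ) / t := by
  rw [← zero_add 1, Icc_add_one_left_eq_Ioc]
  have hone : ∀ m < k, (1 : ℝ) ≤ c * ∑ t ∈ Ioc (r (m + 1)) (r m), (1 : ℝ) / t := by
    intro m hm
    have hrm : (0 : ℝ) < r m := by exact_mod_cast Nat.pos_of_ne_zero (hpos m hm)
    calc (1 : ℝ) ≤ c * (((r m - r (m + 1) : ℕ) : ℝ) / r m) := by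
          rw [mul_div_assoc', one_le_div hrm]
          exact_mod_cast hstep m hm
      _ ≤ c * ∑ t ∈ Ioc (r (m + 1)) (r m), (1 : ℝ) / t := by
          gcongr
          exact sub_div_le_sum_Ioc_one_div _ _
  calc (k : ℝ) = ∑ _m ∈ range k, (1 : ℝ) := by simp
    _ ≤ ∑ m ∈ range k, c * ∑ t ∈ Ioc (r (m + 1)) (r m), (1 : ℝ) / t :=
        sum_le_sum fun m hm => hone m (mem_range.1 hm)
    _ = c * ∑ t ∈ Ioc (r k) (r 0), (1 : ℝ) / t := by
        rw [← mul_sum, sum_range_sum_Ioc_of_antitone _ hr]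
    _ ≤ c * ∑ t ∈ Ioc 0 (r 0), (1 : ℝ) / t :=
        mul_le_mul_of_nonneg_left
          (sum_le_sum_of_subset_of_nonneg (Ioc_subset_Ioc_left (Nat.zero_le _))
            fun _ _ _ => by positivity)
          (Nat.cast_nonneg c)

section SetCover

variable {α : Type*} [DecidableEq α]

lemma card_sdiff_le_card_mul_of_forall_card_le {U C G : Finset α} {T : Finset (Finset α)}
    (hT : ∀ u ∈ U, ∃ A ∈ T, u ∈ A) (hG : ∀ A ∈ T, #((A ∩ U) \ C) ≤ #((G ∩ U) \ C)) :
    #(U \ C) ≤ #T * #((G ∩ U) \ C) := by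
  have hsub : U \ C ⊆ T.biUnion fun A => (A ∩ U) \ C := fun u hu => by
    obtain ⟨huU, huC⟩ := mem_sdiff.1 hu
    obtain ⟨A, hA, huA⟩ := hT u huU
    exact mem_biUnion.2 ⟨A, hA, mem_sdiff.2 ⟨mem_inter.2 ⟨huA, huU⟩, huC⟩⟩
  exact (card_le_card hsub).trans (card_biUnion_le_card_mul _ _ _ hG)

variable (U : Finset α) (G : ℕ → Finset α)

def coveredUpTo (i : ℕ) : Finset α :=
  U.filter fun u => ∃ j < i, u ∈ G j

lemma coveredUpTo_subset (i : ℕ) : coveredUpTo U G i ⊆ U := filter_subset _ _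

lemma coveredUpTo_zero : coveredUpTo U G 0 = ∅ := by simp [coveredUpTo]

lemma coveredUpTo_succ (i : ℕ) : coveredUpTo U G (i + 1) = coveredUpTo U G i ∪ (G i ∩ U) := by
  ext u
  simp only [coveredUpTo, mem_filter, mem_union, mem_inter, Nat.lt_succ_iff_lt_or_eq,
    or_and_right, exists_or, exists_eq_left, and_or_left]
  exact or_congr_right and_comm

lemma monotone_coveredUpTo : Monotone (coveredUpTo U G) := fun _ _ hij _ hu => by
  obtain ⟨huU, j, hj, huG⟩ := mem_filter.1 hu
  exact mem_filter.2 ⟨huU, j, hj.trans_le hij, huG⟩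

lemma card_sdiff_coveredUpTo_succ_add (i : ℕ) :
    #(U \ coveredUpTo U G (i + 1)) + #((G i ∩ U) \ coveredUpTo U G i) =
      #(U \ coveredUpTo U G i) := by
  rw [← card_sdiff_add_card_inter (U \ coveredUpTo U G i) (G i ∩ U), coveredUpTo_succ]
  congr 2 <;> ext u <;> simp only [mem_sdiff, mem_union, mem_inter] <;> tauto

end SetCover

theorem greedy_harmonic_approximation_general
    {α : Type*} [DecidableEq α] (U : Finset α)
    (S : Finset (Finset α))
    (G : ℕ → Finset α)
    (cov : ℕ → Finset α)
    (hcovdef : ∀ i, cov i = U.filter (fun u => ∃ j < i, u ∈ G j))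
    (hgreedy : ∀ i, cov i ≠ U →
      ∀ A ∈ S, ((A ∩ U) \ cov i).card ≤ ((G i ∩ U) \ cov i).card)
    (k : ℕ) (hfirst : ∀ j < k, cov j ≠ U)
    (OPT : ℕ)
    (hOPT : IsLeast {n : ℕ | ∃ T : Finset (Finset α), T ⊆ S ∧
      (∀ u ∈ U, ∃ A ∈ T, u ∈ A) ∧ T.card = n} OPT) :
    (k : ℝ) ≤ (∑ i ∈ Finset.Icc 1 U.card, (1 : ℝ) / i) * OPT := by
  obtain rfl : cov = coveredUpTo U G := funext hcovdef
  obtain ⟨⟨T, hTS, hTcov, rfl⟩, -⟩ := hOPT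
  set r : ℕ → ℕ := fun i => #(U \ coveredUpTo U G i)
  have hr : Antitone r := fun _ _ hij =>
    card_le_card (sdiff_subset_sdiff subset_rfl (monotone_coveredUpTo U G hij))
  have hpos : ∀ m < k, r m ≠ 0 := fun m hm =>
    card_ne_zero.2 (sdiff_nonempty.2 fun hU =>
      hfirst m hm (subset_antisymm (coveredUpTo_subset U G m) hU))
  have hstep : ∀ m < k, r m ≤ #T * (r m - r (m + 1)) := fun m hm => by
    rw [← Nat.eq_sub_of_add_eq' (card_sdiff_coveredUpTo_succ_add U G m)]
    exact card_sdiff_le_card_mul_of_forall_card_le hTcov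
      fun A hA => hgreedy m (hfirst m hm) A (hTS hA)
  have hr0 : r 0 = #U := by simp [r, coveredUpTo_zero]
  rw [mul_comm, ← hr0]
  exact le_mul_sum_one_div_of_le_mul_sub hr hpos hstep

/-- Greedy set cover achieves an `H(n)` approximation: if at each step the
greedy choice `G i` covers the maximum number of uncovered elements, and it
first covers `U` after `k` steps, then `k ≤ H(|U|) · OPT`. -/
theorem greedy_harmonic_approximation
    {α : Type*} [DecidableEq α] (U : Finset α) (hU : U.Nonempty)
    (S : Finset (Finset α)) (hcov : ∀ u ∈ U, ∃ A ∈ S, u ∈ A)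
    (G : ℕ → Finset α) (hG : ∀ i, G i ∈ S)
    (cov : ℕ → Finset α)
    (hcovdef : ∀ i, cov i = U.filter (fun u => ∃ j < i, u ∈ G j))
    (hgreedy : ∀ i, cov i ≠ U →
      ∀ A ∈ S, ((A ∩ U) \ cov i).card ≤ ((G i ∩ U) \ cov i).card)
    (k : ℕ) (hk : cov k = U) (hfirst : ∀ j < k, cov j ≠ U)
    (OPT : ℕ)
    (hOPT : IsLeast {n : ℕ | ∃ T : Finset (Finset α), T ⊆ S ∧
      (∀ u ∈ U, ∃ A ∈ T, u ∈ A) ∧ T.card = n} OPT) :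
    (k : ℝ) ≤ (∑ i ∈ Finset.Icc 1 U.card, (1 : ℝ) / i) * OPT :=
  greedy_harmonic_approximation_general U S G cov hcovdef hgreedy k hfirst OPT hOPT
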